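/- The generalized Poisson kernel k^s(x,t) = t^s/(|x|²+t²)^{(n+s)/2}, s ∈ (0,2), is s-harmonic on the upper half-space: div(t^{1−s} ∇_{(x,t)} k^s) = 0 on ℝ^{n+1}_+. -/

import Mathlib

/-!
With `R = ‖x‖² + t²` the kernel is `t^s R^q`, `q = -(n+s)/2`. The `x`-Laplacian of `R^q` is
`2q (n R^(q-1) + 2(q-1) ‖x‖² R^(q-2))`, while `t^(1-s) ∂_t (t^s R^q) = s R^q + 2q t² R^(q-1)`, whose
`t`-derivative is `2q t ((s+2) R^(q-1) + 2(q-1) t² R^(q-2))`. Since `t^(1-s) t^s = t`, the sum is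
`2q t R^(q-1) (n + s + 2q)`, and the choice of `q` makes the last factor vanish.
-/

open Real

noncomputable section

/-- The generalized Poisson kernel `k^s(x,t) = t^s/(|x|²+t²)^((n+s)/2)` on `ℝ^{n+1}_+`. -/
def genPoissonKernel (n : ℕ) (s : ℝ) (x : EuclideanSpace ℝ (Fin n)) (t : ℝ) : ℝ :=
  t ^ s / (‖x‖ ^ 2 + t ^ 2) ^ (((n : ℝ) + s) / 2)

end

section SecondDerivative

variable {E : Type*} [NormedAddCommGroup E] [NormedSpace ℝ E]

theorem fderiv_fderiv_const_mul_apply {f : E → ℝ} (hf : ContDiff ℝ 2 f) (a : ℝ) (x v w : E) :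
    fderiv ℝ (fun z => fderiv ℝ (fun y => a * f y) z v) x w
      = a * fderiv ℝ (fun z => fderiv ℝ f z v) x w := by
  have hf' : Differentiable ℝ fun z => fderiv ℝ f z v :=
    ((hf.fderiv_right (m := 1) (by norm_num)).clm_apply contDiff_const).differentiable one_ne_zero
  have hmul : (fun z => fderiv ℝ (fun y => a * f y) z v) = fun z => a * fderiv ℝ f z v := by
    funext z
    rw [fderiv_const_mul (hf.differentiable (by norm_num) z)]
    rfl
  rw [hmul, fderiv_const_mul (hf' x)]
  rfl

end SecondDerivative

section RadialPower

variable {E : Type*} [NormedAddCommGroup E] [InnerProductSpace ℝ E] {c : ℝ} (p : ℝ)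

theorem hasFDerivAt_rpow_norm_sq_add (hc : 0 < c) (z : E) :
    HasFDerivAt (fun y : E => (‖y‖ ^ 2 + c) ^ p)
      ((2 * p * (‖z‖ ^ 2 + c) ^ (p - 1)) • innerSL ℝ z) z := by
  have hR : HasFDerivAt (fun y : E => ‖y‖ ^ 2 + c) ((2 : ℕ) • innerSL ℝ z) z := by
    simpa using ((hasFDerivAt_id z).norm_sq).add_const c
  refine ((Real.hasDerivAt_rpow_const (Or.inl (by positivity))).comp_hasFDerivAt z hR).congr_fderiv
    ?_
  ext v
  simp
  ring

theorem fderiv_rpow_norm_sq_add_apply (hc : 0 < c) (z v : E) :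
    fderiv ℝ (fun y : E => (‖y‖ ^ 2 + c) ^ p) z v
      = 2 * p * ((‖z‖ ^ 2 + c) ^ (p - 1) * inner ℝ z v) := by
  rw [(hasFDerivAt_rpow_norm_sq_add p hc z).fderiv]
  simp [mul_assoc]

theorem fderiv_fderiv_rpow_norm_sq_add_apply (hc : 0 < c) (x v : E) :
    fderiv ℝ (fun z => fderiv ℝ (fun y : E => (‖y‖ ^ 2 + c) ^ p) z v) x v
      = 2 * p * ((‖x‖ ^ 2 + c) ^ (p - 1) * ‖v‖ ^ 2
          + 2 * (p - 1) * (‖x‖ ^ 2 + c) ^ (p - 2) * inner ℝ x v ^ 2) := by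
  simp_rw [fderiv_rpow_norm_sq_add_apply p hc]
  have hinner : HasFDerivAt (fun z : E => inner ℝ z v) (innerSL ℝ v) x := by
    have h : (fun z : E => inner ℝ z v) = innerSL ℝ v := by
      ext z
      simp [real_inner_comm]
    exact h ▸ (innerSL ℝ v).hasFDerivAt
  have h : HasFDerivAt (fun z : E => 2 * p * ((‖z‖ ^ 2 + c) ^ (p - 1) * inner ℝ z v)) _ x :=
    ((hasFDerivAt_rpow_norm_sq_add (p - 1) hc x).mul hinner).const_mul (2 * p)
  rw [h.fderiv]
  simp [show p - 1 - 1 = p - 2 by ring]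
  ring

theorem sum_fderiv_fderiv_rpow_norm_sq_add {ι : Type*} [Fintype ι] (b : OrthonormalBasis ι ℝ E)
    (hc : 0 < c) (x : E) :
    ∑ i, fderiv ℝ (fun z => fderiv ℝ (fun y : E => (‖y‖ ^ 2 + c) ^ p) z (b i)) x (b i)
      = 2 * p * (Fintype.card ι * (‖x‖ ^ 2 + c) ^ (p - 1)
          + 2 * (p - 1) * (‖x‖ ^ 2 + c) ^ (p - 2) * ‖x‖ ^ 2) := by
  have hx : ∑ i, inner ℝ x (b i) ^ 2 = ‖x‖ ^ 2 := by
    simpa [← sq, real_inner_comm x, real_inner_self_eq_norm_sq] using b.sum_inner_mul_inner x x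
  simp only [fderiv_fderiv_rpow_norm_sq_add_apply p hc, b.norm_eq_one, ← Finset.mul_sum]
  simp [Finset.sum_add_distrib, ← Finset.mul_sum, hx]

end RadialPower

section WeightedRadial

variable {a : ℝ}

theorem hasDerivAt_rpow_add_sq (q : ℝ) {τ : ℝ} (h : a + τ ^ 2 ≠ 0) :
    HasDerivAt (fun σ => (a + σ ^ 2) ^ q) (2 * q * τ * (a + τ ^ 2) ^ (q - 1)) τ := by
  have hsq : HasDerivAt (fun σ : ℝ => a + σ ^ 2) (2 * τ) τ := by
    simpa using (hasDerivAt_pow 2 τ).const_add a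
  refine ((Real.hasDerivAt_rpow_const (Or.inl h)).comp τ hsq).congr_deriv ?_
  ring

variable {s q : ℝ}

theorem rpow_one_sub_mul_deriv_rpow_mul_rpow_add_sq (ha : 0 ≤ a) {τ : ℝ} (hτ : 0 < τ) :
    τ ^ (1 - s) * deriv (fun σ => σ ^ s * (a + σ ^ 2) ^ q) τ
      = s * (a + τ ^ 2) ^ q + 2 * q * τ ^ 2 * (a + τ ^ 2) ^ (q - 1) := by
  have hk : HasDerivAt (fun σ => σ ^ s * (a + σ ^ 2) ^ q) _ τ :=
    (Real.hasDerivAt_rpow_const (Or.inl hτ.ne')).mul (hasDerivAt_rpow_add_sq q (by positivity))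
  rw [hk.deriv]
  have h₁ : τ ^ (1 - s) * τ ^ (s - 1) = 1 := by
    rw [← Real.rpow_add hτ]; norm_num
  have h₂ : τ ^ (1 - s) * τ ^ s = τ := by
    rw [← Real.rpow_add hτ]; norm_num
  linear_combination (s * (a + τ ^ 2) ^ q) * h₁ + (2 * q * τ * (a + τ ^ 2) ^ (q - 1)) * h₂

theorem deriv_rpow_one_sub_mul_deriv_rpow_mul_rpow_add_sq (ha : 0 ≤ a) {t : ℝ} (ht : 0 < t) :
    deriv (fun τ => τ ^ (1 - s) * deriv (fun σ => σ ^ s * (a + σ ^ 2) ^ q) τ) t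
      = 2 * q * t * ((s + 2) * (a + t ^ 2) ^ (q - 1)
          + 2 * (q - 1) * t ^ 2 * (a + t ^ 2) ^ (q - 2)) := by
  have heq : (fun τ => τ ^ (1 - s) * deriv (fun σ => σ ^ s * (a + σ ^ 2) ^ q) τ)
      =ᶠ[nhds t] fun τ => s * (a + τ ^ 2) ^ q + 2 * q * τ ^ 2 * (a + τ ^ 2) ^ (q - 1) := by
    filter_upwards [Ioi_mem_nhds ht] with τ hτ
    exact rpow_one_sub_mul_deriv_rpow_mul_rpow_add_sq ha hτ
  have hR : a + t ^ 2 ≠ 0 := by positivity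
  have h : HasDerivAt (fun τ => s * (a + τ ^ 2) ^ q + 2 * q * τ ^ 2 * (a + τ ^ 2) ^ (q - 1)) _ t :=
    ((hasDerivAt_rpow_add_sq q hR).const_mul s).add
      (((hasDerivAt_pow 2 t).const_mul (2 * q)).mul (hasDerivAt_rpow_add_sq (q - 1) hR))
  rw [heq.deriv_eq, h.deriv, show q - 1 - 1 = q - 2 by ring]
  ring

end WeightedRadial

theorem genPoissonKernel_eq_mul_rpow_neg (n : ℕ) (s : ℝ) (x : EuclideanSpace ℝ (Fin n)) (t : ℝ) :
    genPoissonKernel n s x t = t ^ s * (‖x‖ ^ 2 + t ^ 2) ^ (-(((n : ℝ) + s) / 2)) := by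
  rw [genPoissonKernel, rpow_neg (by positivity), div_eq_mul_inv]

theorem genPoissonKernel_s_harmonic_general (n : ℕ) (s : ℝ)
    (x : EuclideanSpace ℝ (Fin n)) (t : ℝ) (ht : 0 < t) :
    t ^ (1 - s) *
        (∑ i : Fin n,
          fderiv ℝ (fun z => fderiv ℝ (fun y => genPoissonKernel n s y t) z
              (EuclideanSpace.single i 1)) x (EuclideanSpace.single i 1))
      + deriv (fun τ : ℝ => τ ^ (1 - s) * deriv (fun σ => genPoissonKernel n s x σ) τ) t
      = 0 := by
  set q : ℝ := -(((n : ℝ) + s) / 2)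
  have hk : genPoissonKernel n s = fun y τ => τ ^ s * (‖y‖ ^ 2 + τ ^ 2) ^ q := by
    funext y τ
    exact genPoissonKernel_eq_mul_rpow_neg n s y τ
  have hf : ContDiff ℝ 2 fun y : EuclideanSpace ℝ (Fin n) => (‖y‖ ^ 2 + t ^ 2) ^ q :=
    ((contDiff_norm_sq ℝ).add contDiff_const).rpow_const_of_ne fun y => by positivity
  simp only [hk, fderiv_fderiv_const_mul_apply hf, ← Finset.mul_sum,
    ← EuclideanSpace.basisFun_apply (Fin n) ℝ]
  rw [sum_fderiv_fderiv_rpow_norm_sq_add q _ (by positivity),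
    deriv_rpow_one_sub_mul_deriv_rpow_mul_rpow_add_sq (by positivity) ht, Fintype.card_fin]
  have hts : t ^ (1 - s) * t ^ s = t := by
    rw [← rpow_add ht]; norm_num
  have hpow : (‖x‖ ^ 2 + t ^ 2) ^ (q - 1) = (‖x‖ ^ 2 + t ^ 2) ^ (q - 2) * (‖x‖ ^ 2 + t ^ 2) := by
    rw [← rpow_add_one (by positivity)]; ring_nf
  linear_combination (2 * q * ((n : ℝ) * (‖x‖ ^ 2 + t ^ 2) ^ (q - 1)
    + 2 * (q - 1) * (‖x‖ ^ 2 + t ^ 2) ^ (q - 2) * ‖x‖ ^ 2)) * hts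
    + 4 * q * (1 - q) * t * hpow

/-- The generalized Poisson kernel is `s`-harmonic on the upper half-space:
`t^{1−s} Δ_x k^s + ∂_t(t^{1−s} ∂_t k^s) = 0`, i.e. `div(t^{1−s} ∇_{(x,t)} k^s) = 0`. -/
theorem genPoissonKernel_s_harmonic (n : ℕ) (s : ℝ) (hs0 : 0 < s) (hs2 : s < 2)
    (x : EuclideanSpace ℝ (Fin n)) (t : ℝ) (ht : 0 < t) :
    t ^ (1 - s) *
        (∑ i : Fin n,
          fderiv ℝ (fun z => fderiv ℝ (fun y => genPoissonKernel n s y t) z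
              (EuclideanSpace.single i 1)) x (EuclideanSpace.single i 1))
      + deriv (fun τ : ℝ => τ ^ (1 - s) * deriv (fun σ => genPoissonKernel n s x σ) τ) t
      = 0 :=
  genPoissonKernel_s_harmonic_general n s x t ht
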